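/- Let n ≥ 2 be an integer and let a_1, …, a_n, c be real numbers satisfying (∑_{i=1}^n a_i)² = (n−1)(∑_{i=1}^n a_i² + c). Then 2·a_1·a_2 ≥ c. -/
import Mathlib


/-- B. Y. Chen's algebraic lemma: if `n ≥ 2` and real numbers `a 0, …, a (n-1), c`
satisfy `(∑ aᵢ)² = (n − 1)(∑ aᵢ² + c)`, then `2 a₁ a₂ ≥ c`
(here `a₁ = a 0`, `a₂ = a 1` in 0-based indexing). -/
theorem chen_lemma (n : ℕ) (hn : 2 ≤ n) (a : Fin n → ℝ) (c : ℝ)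
    (h : (∑ i, a i) ^ 2 = ((n : ℝ) - 1) * (∑ i, (a i) ^ 2 + c)) :
    2 * a ⟨0, by omega⟩ * a ⟨1, by omega⟩ ≥ c := by
  set i0 : Fin n := ⟨0, by omega⟩
  set i1 : Fin n := ⟨1, by omega⟩
  have hne : i0 ≠ i1 := by simp [i0, i1, Fin.ext_iff]
  set s : Finset (Fin n) := ({i0, i1} : Finset (Fin n))
  set t : Finset (Fin n) := Finset.univ \ s
  have hsub : s ⊆ Finset.univ := Finset.subset_univ _
  have hcards : s.card = 2 := by
    rw [Finset.card_insert_of_notMem (by simpa using hne), Finset.card_singleton]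
  have hcardt : t.card = n - 2 := by
    rw [Finset.card_sdiff_of_subset hsub, Finset.card_univ, Fintype.card_fin, hcards]
  have hsum : ∀ f : Fin n → ℝ, ∑ i ∈ t, f i + (f i0 + f i1) = ∑ i, f i := by
    intro f
    rw [← Finset.sum_pair hne, Finset.sum_sdiff hsub]
  have hCS : (∑ i ∈ t, a i) ^ 2 ≤ (t.card : ℝ) * ∑ i ∈ t, (a i) ^ 2 :=
    sq_sum_le_card_mul_sum_sq (s := t) (f := a)
  set S : ℝ := ∑ i ∈ t, a i
  set Q : ℝ := ∑ i ∈ t, (a i) ^ 2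
  have h1 : S + (a i0 + a i1) = ∑ i, a i := hsum a
  have h2 : Q + ((a i0) ^ 2 + (a i1) ^ 2) = ∑ i, (a i) ^ 2 := hsum (fun i => (a i) ^ 2)
  rw [← h1, ← h2] at h
  have hct : (t.card : ℝ) = (n : ℝ) - 2 := by
    rw [hcardt]; push_cast [Nat.cast_sub hn]; ring
  rw [hct] at hCS
  have hn2 : (2 : ℝ) ≤ (n : ℝ) := by exact_mod_cast hn
  rcases eq_or_lt_of_le hn2 with he | hl
  · have hn' : n = 2 := by exact_mod_cast he.symm
    have ht : t = ∅ := Finset.card_eq_zero.mp (by omega)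
    have hS : S = 0 := by simp [S, ht]
    have hQ : Q = 0 := by simp [Q, ht]
    rw [hS, hQ, ← he] at h
    nlinarith [h]
  · have hpos : (0 : ℝ) < (n : ℝ) - 2 := by linarith
    have hpos1 : (0 : ℝ) < (n : ℝ) - 1 := by linarith
    have hd_h : ((n : ℝ) - 2) * (S + (a i0 + a i1)) ^ 2
        = ((n : ℝ) - 2) * (((n : ℝ) - 1) * (Q + ((a i0) ^ 2 + (a i1) ^ 2) + c)) := by rw [h]
    have hfin : 0 ≤ ((n : ℝ) - 2) * (((n : ℝ) - 1)
        * ((a i0 + a i1) ^ 2 - ((a i0) ^ 2 + (a i1) ^ 2) - c)) := by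
      nlinarith [sq_nonneg (((n : ℝ) - 2) * (a i0 + a i1) - S), hCS,
        mul_nonneg hpos.le (sub_nonneg.mpr hCS), hd_h]
    have hfin2 : 0 ≤ ((n : ℝ) - 1)
        * ((a i0 + a i1) ^ 2 - ((a i0) ^ 2 + (a i1) ^ 2) - c) :=
      nonneg_of_mul_nonneg_right (by linarith [hfin]) hpos
    have hfin3 : 0 ≤ (a i0 + a i1) ^ 2 - ((a i0) ^ 2 + (a i1) ^ 2) - c :=
      nonneg_of_mul_nonneg_right (by linarith [hfin2]) hpos1
    nlinarith [hfin3]
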